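/- Let f : ℝⁿ → ℝ ∪ {±∞} be lower semi-continuous with {x : f(x) < +∞} unbounded, and suppose D^†_f(∞) := {v ∈ ℝⁿ : f^†(∞; v) < +∞} is nonempty. Then D^†_f(∞) equals the interior of D^↑_f(∞) := {v ∈ ℝⁿ : f^↑(∞; v) < +∞}; moreover, the function v ↦ f^↑(∞; v) is continuous at each v ∈ D^†_f(∞) and f^↑(∞; v) = f^†(∞; v) for every v ∈ D^†_f(∞). -/

import Mathlib

open Filter Topology Metric Set Bornology
open scoped InnerProductSpace Pointwise

noncomputable section

/-- Euclidean `n`-space. -/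
abbrev En (n : ℕ) : Type := EuclideanSpace ℝ (Fin n)

/-- The Clarke tangent cone at infinity of `C ⊆ E`, where "going to infinity" is
measured by `‖p x‖ → ∞` for a projection map `p`:  `v` belongs to the cone iff for all
sequences `x k ∈ C` with `‖p (x k)‖ → ∞` and all positive sequences `t k → 0` there is a
sequence `w k → v` with `x k + t k • w k ∈ C` for all `k`. -/
def tangentConeAtInfty {E F : Type*} [NormedAddCommGroup E] [NormedSpace ℝ E] [Norm F]
    (p : E → F) (C : Set E) : Set E :=
  {v | ∀ (x : ℕ → E) (t : ℕ → ℝ), (∀ k, x k ∈ C) →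
      Tendsto (fun k => ‖p (x k)‖) atTop atTop →
      (∀ k, 0 < t k) → Tendsto t atTop (𝓝 0) →
      ∃ w : ℕ → E, Tendsto w atTop (𝓝 v) ∧ ∀ k, x k + t k • w k ∈ C}

/-- Extended-real subtraction with the paper's convention that `λ₁ + λ₂ = +∞` whenever one
of the summands is `+∞`; thus `a - b = +∞` if `a = +∞` or `b = -∞`. -/
def esub (a b : EReal) : EReal := if a = ⊤ ∨ b = ⊥ then ⊤ else a - b

/-- The difference quotient `(f (x + t • w) - f x) / t`. -/
def dq {n : ℕ} (f : En n → EReal) (x : En n) (t : ℝ) (w : En n) : EReal :=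
  esub (f (x + t • w)) (f x) / (t : EReal)

/-- The filter of neighborhoods of infinity in `ℝⁿ` (`‖x‖ → ∞`). -/
def atInfty (n : ℕ) : Filter (En n) := comap (fun x : En n => ‖x‖) atTop

/-- The upper subderivative of `f` at infinity with respect to `v`:
`f^↑(∞; v) = lim_{ε↓0} limsup_{‖x‖→∞, t↓0} inf_{w ∈ B_ε(v)} (f(x+tw) - f(x))/t`;
since the inner `limsup` is antitone in `ε`, the limit as `ε ↓ 0` is the supremum
over `ε > 0`. -/
def upSub {n : ℕ} (f : En n → EReal) (v : En n) : EReal :=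
  ⨆ (ε : ℝ) (_ : 0 < ε),
    Filter.limsup (fun q : En n × ℝ => ⨅ w ∈ closedBall v ε, dq f q.1 q.2 w)
      (atInfty n ×ˢ 𝓝[>] (0:ℝ))

/-- `f^†(∞; v) = limsup_{‖x‖→∞, t↓0, w→v} (f(x+tw) - f(x))/t`; `f` is directionally
Lipschitz at infinity with respect to `v` iff this quantity is `< +∞`. -/
def dagSub {n : ℕ} (f : En n → EReal) (v : En n) : EReal :=
  Filter.limsup (fun q : En n × (ℝ × En n) => dq f q.1 q.2.1 q.2.2)
    (atInfty n ×ˢ (𝓝[>] (0:ℝ) ×ˢ 𝓝 v))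

lemma atInfty_basis (n : ℕ) :
    (atInfty n).HasBasis (fun _ : ℝ => True) (fun R => {x : En n | R ≤ ‖x‖}) :=
  Filter.atTop_basis.comap _

lemma eventually_dag_iff {n : ℕ} {v : En n} {p : En n → ℝ → En n → Prop} :
    (∀ᶠ q in atInfty n ×ˢ (𝓝[>] (0:ℝ) ×ˢ 𝓝 v), p q.1 q.2.1 q.2.2) ↔
      ∃ R : ℝ, ∃ δ > (0:ℝ), ∃ ε > (0:ℝ), ∀ x t u, R ≤ ‖x‖ → 0 < t → t < δ →
        dist u v < ε → p x t u := by
  rw [((atInfty_basis n).prod ((nhdsGT_basis (0:ℝ)).prod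
      (Metric.nhds_basis_ball (x := v)))).eventually_iff]
  constructor
  · rintro ⟨⟨R, δ, ε⟩, ⟨-, hδ, hε⟩, H⟩
    exact ⟨R, δ, hδ, ε, hε, fun x t u hx ht1 ht2 hu =>
      H (Set.mk_mem_prod hx (Set.mk_mem_prod ⟨ht1, ht2⟩ hu))⟩
  · rintro ⟨R, δ, hδ, ε, hε, H⟩
    exact ⟨⟨R, δ, ε⟩, ⟨trivial, hδ, hε⟩,
      fun q hq => H q.1 q.2.1 q.2.2 hq.1 hq.2.1.1 hq.2.1.2 hq.2.2⟩

lemma eventually_base_iff {n : ℕ} {p : En n → ℝ → Prop} :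
    (∀ᶠ q in atInfty n ×ˢ 𝓝[>] (0:ℝ), p q.1 q.2) ↔
      ∃ R : ℝ, ∃ δ > (0:ℝ), ∀ x t, R ≤ ‖x‖ → 0 < t → t < δ → p x t := by
  rw [((atInfty_basis n).prod (nhdsGT_basis (0:ℝ))).eventually_iff]
  constructor
  · rintro ⟨⟨R, δ⟩, ⟨-, hδ⟩, H⟩
    exact ⟨R, δ, hδ, fun x t hx ht1 ht2 => H (Set.mk_mem_prod hx ⟨ht1, ht2⟩)⟩
  · rintro ⟨R, δ, hδ, H⟩
    exact ⟨⟨R, δ⟩, ⟨trivial, hδ⟩, fun q hq => H q.1 q.2 hq.1 hq.2.1 hq.2.2⟩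

lemma exists_real_gt (x : EReal) (h : x < ⊤) : ∃ c : ℝ, x < c := by
  obtain ⟨c, hc, -⟩ := EReal.exists_between_coe_real h
  exact ⟨c, hc⟩

lemma le_of_forall_coe_gt {x y : EReal} (h : ∀ c : ℝ, y < c → x ≤ c) : x ≤ y := by
  by_contra hx
  obtain ⟨c, hc1, hc2⟩ := EReal.exists_between_coe_real (not_le.1 hx)
  exact absurd (h c hc1) (not_le.2 hc2)

lemma le_coe_of_forall_add {x : EReal} {c : ℝ} (h : ∀ η : ℝ, 0 < η → x ≤ ↑(c + η)) : x ≤ ↑c := by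
  by_contra hx
  obtain ⟨y, hy1, hy2⟩ := EReal.exists_between_coe_real (not_le.1 hx)
  have h1 : (0:ℝ) < y - c := by exact_mod_cast sub_pos.2 (by exact_mod_cast hy1)
  have := h (y - c) h1
  rw [add_sub_cancel] at this
  exact absurd this (not_le.2 hy2)

lemma ereal_trich (a : EReal) (h : a ≠ ⊤) : a = ⊥ ∨ ∃ s : ℝ, a = (s : EReal) := by
  induction a with
  | bot => exact Or.inl rfl
  | coe s => exact Or.inr ⟨s, rfl⟩
  | top => exact absurd rfl h

section dq
variable {n : ℕ} {f : En n → EReal} {x w : En n} {t : ℝ}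

lemma dq_coe (ht : 0 < t) {r s : ℝ} (hx : f x = (r : EReal)) (hy : f (x + t • w) = (s : EReal)) :
    dq f x t w = (((s - r) / t : ℝ) : EReal) := by
  rw [dq, esub, hx, hy, if_neg (by simp), EReal.coe_div, EReal.coe_sub]

lemma dq_top (ht : 0 < t) (h : f (x + t • w) = ⊤ ∨ f x = ⊥) : dq f x t w = ⊤ := by
  rw [dq, esub, if_pos h]
  exact EReal.top_div_of_pos_ne_top (by exact_mod_cast ht) (EReal.coe_ne_top t)

lemma dq_lt_elim {c : ℝ} (ht : 0 < t) (h : dq f x t w < (c : EReal)) :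
    f (x + t • w) ≠ ⊤ ∧ f x ≠ ⊥ := by
  constructor
  · intro htop
    rw [dq_top ht (Or.inl htop)] at h
    exact absurd h (by simp)
  · intro hbot
    rw [dq_top ht (Or.inr hbot)] at h
    exact absurd h (by simp)

lemma lt_of_dq_lt {c r s : ℝ} (ht : 0 < t) (hx : f x = (r : EReal))
    (hy : f (x + t • w) = (s : EReal)) (h : dq f x t w < (c : EReal)) :
    s < r + t * c := by
  rw [dq_coe ht hx hy, EReal.coe_lt_coe_iff, div_lt_iff₀ ht] at h
  linarith

lemma dq_le_of {r d : ℝ} (ht : 0 < t) (hx : f x = (r : EReal)) (hy : f (x + t • w) ≠ ⊤)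
    (hs : ∀ s : ℝ, f (x + t • w) = (s : EReal) → s ≤ r + t * d) :
    dq f x t w ≤ (d : EReal) := by
  rcases ereal_trich _ hy with hfy | ⟨s, hfy⟩
  · rw [dq, esub, hfy, hx, if_neg (by simp)]
    rw [show (⊥ : EReal) - (r : EReal) = ⊥ from by rw [sub_eq_add_neg]; simp]
    rw [EReal.bot_div_of_pos_ne_top (by exact_mod_cast ht) (EReal.coe_ne_top t)]
    exact bot_le
  · rw [dq_coe ht hx hfy, EReal.coe_le_coe_iff, div_le_iff₀ ht]
    have := hs s hfy
    linarith
end dq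

lemma norm_le_aux {n : ℕ} (a b : En n) : ‖a‖ ≤ ‖b‖ + ‖a - b‖ := by
  calc ‖a‖ = ‖b + (a - b)‖ := by rw [add_sub_cancel]
  _ ≤ ‖b‖ + ‖a - b‖ := norm_add_le _ _

lemma norm_add_smul_ge {n : ℕ} (x w : En n) {s B : ℝ} (hs : 0 ≤ s) (hs1 : s ≤ 1)
    (hw : ‖w‖ ≤ B) : ‖x‖ - B ≤ ‖x + s • w‖ := by
  have h1 : ‖x‖ ≤ ‖x + s • w‖ + ‖s • w‖ := by
    calc ‖x‖ = ‖(x + s • w) + (-(s • w))‖ := by rw [add_neg_cancel_right]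
    _ ≤ ‖x + s • w‖ + ‖-(s • w)‖ := norm_add_le _ _
    _ = ‖x + s • w‖ + ‖s • w‖ := by rw [norm_neg]
  have h2 : ‖s • w‖ ≤ B := by
    rw [norm_smul, Real.norm_of_nonneg hs]
    calc s * ‖w‖ ≤ 1 * B := mul_le_mul hs1 hw (norm_nonneg w) (by norm_num)
    _ = B := one_mul B
  linarith

section main
variable {n : ℕ} (f : En n → EReal)

/-- Extraction of a uniform estimate from `upSub f vh < ch`. -/
lemma hh_extract {vh : En n} {ch : ℝ} (hh : upSub f vh < (ch : EReal)) :
    ∀ ε > (0:ℝ), ∃ R : ℝ, ∃ δ > (0:ℝ), ∀ x t, R ≤ ‖x‖ → 0 < t → t < δ →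
      ∃ w', dist w' vh ≤ ε ∧ dq f x t w' < (ch : EReal) := by
  intro ε hε
  have h1 : Filter.limsup (fun q : En n × ℝ => ⨅ w ∈ closedBall vh ε, dq f q.1 q.2 w)
      (atInfty n ×ˢ 𝓝[>] (0:ℝ)) < (ch : EReal) :=
    lt_of_le_of_lt (le_iSup₂ (f := fun (ε : ℝ) (_ : 0 < ε) =>
      Filter.limsup (fun q : En n × ℝ => ⨅ w ∈ closedBall vh ε, dq f q.1 q.2 w)
        (atInfty n ×ˢ 𝓝[>] (0:ℝ))) ε hε) hh
  have h2 := eventually_lt_of_limsup_lt h1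
  rw [eventually_base_iff (p := fun x t => (⨅ w ∈ closedBall vh ε, dq f x t w) < (ch : EReal))] at h2
  obtain ⟨R, δ, hδ, H⟩ := h2
  refine ⟨R, δ, hδ, fun x t hx ht1 ht2 => ?_⟩
  have h3 := H x t hx ht1 ht2
  rw [iInf_lt_iff] at h3
  obtain ⟨w', hw'⟩ := h3
  rw [iInf_lt_iff] at hw'
  obtain ⟨hmem, hlt⟩ := hw'
  exact ⟨w', by simpa [mem_closedBall] using hmem, hlt⟩

/-- Near infinity, `f` is real-valued. -/
lemma freal {v₀ : En n} (h : dagSub f v₀ < ⊤) :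
    ∃ R₁ : ℝ, ∀ x : En n, R₁ ≤ ‖x‖ → ∃ r : ℝ, f x = (r : EReal) := by
  obtain ⟨c, hc⟩ := exists_real_gt _ h
  obtain ⟨R, δ, hδ, ε, hε, H⟩ := (eventually_dag_iff (p := fun x t u => dq f x t u < (c : EReal))).1 (eventually_lt_of_limsup_lt hc)
  have ht₀ : 0 < δ / 2 := half_pos hδ
  have ht₀δ : δ / 2 < δ := half_lt_self hδ
  have hbot : ∀ x : En n, R ≤ ‖x‖ → f x ≠ ⊥ := fun x hx =>
    (dq_lt_elim ht₀ (H x (δ/2) v₀ hx ht₀ ht₀δ (by simp [hε]))).2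
  refine ⟨max R (R + (δ/2) * ‖v₀‖), fun y hy => ?_⟩
  have hyR : R ≤ ‖y‖ := le_trans (le_max_left _ _) hy
  have hx : R ≤ ‖y - (δ/2) • v₀‖ := by
    have h1 : ‖y‖ ≤ ‖y - (δ/2) • v₀‖ + ‖(δ/2) • v₀‖ := by
      have := norm_le_aux y (y - (δ/2) • v₀)
      simpa using this
    have hn : ‖(δ/2) • v₀‖ = (δ/2) * ‖v₀‖ := by rw [norm_smul, Real.norm_of_nonneg ht₀.le]
    have h2 := le_trans (le_max_right _ _) hy
    linarith
  have heq : y - (δ/2) • v₀ + (δ/2) • v₀ = y := sub_add_cancel _ _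
  have hdq := H (y - (δ/2) • v₀) (δ/2) v₀ hx ht₀ ht₀δ (by simp [hε])
  have h1 := (dq_lt_elim ht₀ hdq).1
  rw [heq] at h1
  rcases ereal_trich (f y) h1 with hb | hs
  · exact absurd hb (hbot y hyR)
  · exact hs
end main

set_option maxHeartbeats 1000000 in
/-- The key composition estimate. -/
lemma core {n : ℕ} (f : En n → EReal) {v₀ vh : En n} {cg ch lam : ℝ}
    (hreal : ∃ R₁ : ℝ, ∀ x : En n, R₁ ≤ ‖x‖ → ∃ r : ℝ, f x = (r : EReal))
    (hg : dagSub f v₀ < (cg : EReal)) (hh : upSub f vh < (ch : EReal))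
    (h0 : 0 < lam) (h1 : lam < 1) :
    dagSub f (lam • v₀ + (1 - lam) • vh) ≤ (((1 - lam) * ch + lam * cg : ℝ) : EReal) := by
  have hlam' : lam ≠ 0 := ne_of_gt h0
  have hμ0 : 0 < 1 - lam := by linarith
  obtain ⟨R₁, hR₁⟩ := hreal
  obtain ⟨Rg, δg, hδg, εg, hεg, Hg⟩ :=
    (eventually_dag_iff (p := fun x t u => dq f x t u < (cg : EReal))).1
      (eventually_lt_of_limsup_lt hg)
  have hε : 0 < lam * εg / 4 := by positivity
  obtain ⟨Rh, δh, hδh, Hh⟩ := hh_extract f hh (lam * εg / 4) hε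
  set B := ‖v₀‖ + ‖vh‖ + εg + 1 with hB
  have hBpos : 0 < B := by positivity
  simp only [dagSub]
  refine Filter.limsup_le_of_le (by isBoundedDefault) ?_
  rw [eventually_dag_iff
    (p := fun x t u => dq f x t u ≤ (((1 - lam) * ch + lam * cg : ℝ) : EReal))]
  refine ⟨max R₁ (max (Rg + B) (max Rh (R₁ + B))), min 1 (min (δh / (1 - lam)) (δg / lam)),
    by positivity, lam * εg / 4, hε, fun x t u hx ht0 htδ hu => ?_⟩
  have hx1 : R₁ ≤ ‖x‖ := le_trans (le_max_left _ _) hx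
  have hx2 : Rg + B ≤ ‖x‖ := le_trans (le_trans (le_max_left _ _) (le_max_right _ _)) hx
  have hx3 : Rh ≤ ‖x‖ :=
    le_trans (le_trans (le_trans (le_max_left _ _) (le_max_right _ _)) (le_max_right _ _)) hx
  have hx4 : R₁ + B ≤ ‖x‖ :=
    le_trans (le_trans (le_trans (le_max_right _ _) (le_max_right _ _)) (le_max_right _ _)) hx
  have ht1 : t < 1 := lt_of_lt_of_le htδ (min_le_left _ _)
  have ht2 : t < δh / (1 - lam) :=
    lt_of_lt_of_le htδ (le_trans (min_le_right _ _) (min_le_left _ _))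
  have ht3 : t < δg / lam :=
    lt_of_lt_of_le htδ (le_trans (min_le_right _ _) (min_le_right _ _))
  obtain ⟨r, hr⟩ := hR₁ x hx1
  -- step 1: use the `upSub` estimate at time `(1-lam)*t`
  have hμt : 0 < (1 - lam) * t := mul_pos hμ0 ht0
  have hμtδ : (1 - lam) * t < δh := by
    rw [lt_div_iff₀ hμ0] at ht2; linarith [ht2]
  obtain ⟨w', hw'd, hw'q⟩ := Hh x ((1 - lam) * t) hx3 hμt hμtδ
  have hw'n : ‖w'‖ ≤ B := by
    have h5 := norm_le_aux w' vh
    have h6 : ‖w' - vh‖ ≤ lam * εg / 4 := by rw [← dist_eq_norm]; exact hw'd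
    have h7 : lam * εg ≤ εg := mul_le_of_le_one_left hεg.le h1.le
    linarith [norm_nonneg vh, norm_nonneg v₀]
  have hyn : ‖x‖ - B ≤ ‖x + ((1 - lam) * t) • w'‖ :=
    norm_add_smul_ge x w' hμt.le
      (by nlinarith : (1 - lam) * t ≤ 1) hw'n
  have hy1 : R₁ ≤ ‖x + ((1 - lam) * t) • w'‖ := by linarith
  obtain ⟨s, hs⟩ := hR₁ _ hy1
  have hstep1 : s < r + ((1 - lam) * t) * ch := lt_of_dq_lt hμt hr hs hw'q
  -- step 2: use the `dagSub` estimate at `v₀` from the new base point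
  set y := x + ((1 - lam) * t) • w' with hydef
  set z := lam⁻¹ • (u - (1 - lam) • w') with hzdef
  have hz : y + (lam * t) • z = x + t • u := by
    rw [hydef, hzdef]
    match_scalars <;> field_simp <;> ring
  have hzd : dist z v₀ < εg := by
    rw [dist_eq_norm]
    have hrel : lam • (z - v₀) = (u - (lam • v₀ + (1 - lam) • vh)) + (1 - lam) • (vh - w') := by
      rw [hzdef]; match_scalars <;> field_simp <;> ring
    have h5 : ‖u - (lam • v₀ + (1 - lam) • vh)‖ < lam * εg / 4 := by
      rw [← dist_eq_norm]; exact hu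
    have h6 : ‖vh - w'‖ ≤ lam * εg / 4 := by
      rw [← dist_eq_norm, dist_comm]; exact hw'd
    have h7 : ‖lam • (z - v₀)‖ ≤ ‖u - (lam • v₀ + (1 - lam) • vh)‖ + (1 - lam) * ‖vh - w'‖ := by
      rw [hrel]
      refine le_trans (norm_add_le _ _) ?_
      rw [norm_smul, Real.norm_of_nonneg hμ0.le]
    have h8 : ‖lam • (z - v₀)‖ = lam * ‖z - v₀‖ := by
      rw [norm_smul, Real.norm_of_nonneg h0.le]
    rw [h8] at h7
    have h9 : (1 - lam) * ‖vh - w'‖ ≤ ‖vh - w'‖ :=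
      mul_le_of_le_one_left (norm_nonneg _) (by linarith)
    have h10 : lam * ‖z - v₀‖ < lam * εg := by
      have := mul_pos h0 hεg
      linarith
    exact (mul_lt_mul_iff_right₀ h0).1 h10
  have hyg : Rg ≤ ‖y‖ := by rw [hydef]; linarith
  have hlt0 : 0 < lam * t := mul_pos h0 ht0
  have hltδ : lam * t < δg := by rw [lt_div_iff₀ h0] at ht3; linarith [ht3]
  have hq2 := Hg y (lam * t) z hyg hlt0 hltδ hzd
  have hfT : f (x + t • u) ≠ ⊤ := by
    have := (dq_lt_elim hlt0 hq2).1
    rwa [hz] at this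
  have hun : ‖u‖ ≤ B := by
    have h5 := norm_le_aux u (lam • v₀ + (1 - lam) • vh)
    have h6 : ‖u - (lam • v₀ + (1 - lam) • vh)‖ < lam * εg / 4 := by
      rw [← dist_eq_norm]; exact hu
    have h7 : ‖lam • v₀ + (1 - lam) • vh‖ ≤ lam * ‖v₀‖ + (1 - lam) * ‖vh‖ := by
      refine le_trans (norm_add_le _ _) ?_
      rw [norm_smul, norm_smul, Real.norm_of_nonneg h0.le, Real.norm_of_nonneg hμ0.le]
    have h8 : lam * ‖v₀‖ ≤ ‖v₀‖ := mul_le_of_le_one_left (norm_nonneg _) h1.le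
    have h9 : (1 - lam) * ‖vh‖ ≤ ‖vh‖ := mul_le_of_le_one_left (norm_nonneg _) (by linarith)
    have h10 : lam * εg ≤ εg := mul_le_of_le_one_left hεg.le h1.le
    linarith
  have hxu1 : R₁ ≤ ‖x + t • u‖ := by
    have := norm_add_smul_ge x u ht0.le ht1.le hun
    linarith
  obtain ⟨s', hs'⟩ := hR₁ _ hxu1
  have hs'' : f (y + (lam * t) • z) = (s' : EReal) := by rw [hz]; exact hs'
  have hstep2 : s' < s + (lam * t) * cg := lt_of_dq_lt hlt0 hs hs'' hq2
  refine dq_le_of ht0 hr hfT fun s₃ hs₃ => ?_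
  have hs₃' : s₃ = s' := by
    rw [hs₃] at hs'
    exact_mod_cast hs'
  rw [hs₃']
  have hrng : t * ((1 - lam) * ch + lam * cg) = (1 - lam) * t * ch + lam * t * cg := by ring
  linarith

lemma upSub_le_dagSub {n : ℕ} (f : En n → EReal) (v : En n) : upSub f v ≤ dagSub f v := by
  simp only [upSub, dagSub, Filter.limsup_eq]
  apply iSup₂_le
  intro ε hε
  apply le_sInf
  intro a ha
  rw [mem_setOf_eq] at ha
  apply sInf_le
  rw [mem_setOf_eq,
    eventually_base_iff (p := fun x t => (⨅ w ∈ closedBall v ε, dq f x t w) ≤ a)]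
  obtain ⟨R, δ, hδ, ε', hε', H⟩ := (eventually_dag_iff (p := fun x t u => dq f x t u ≤ a)).1 ha
  refine ⟨R, δ, hδ, fun x t hx ht1 ht2 => ?_⟩
  exact le_trans (iInf₂_le v (mem_closedBall_self hε.le)) (H x t v hx ht1 ht2 (by simpa using hε'))

lemma dagSub_le_of_lt {n : ℕ} (f : En n → EReal) {v : En n} {c : ℝ}
    (h : dagSub f v < (c : EReal)) : ∀ᶠ v' in 𝓝 v, dagSub f v' ≤ (c : EReal) := by
  obtain ⟨R, δ, hδ, ε, hε, H⟩ := (eventually_dag_iff (p := fun x t u => dq f x t u < (c : EReal))).1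
    (eventually_lt_of_limsup_lt h)
  filter_upwards [Metric.ball_mem_nhds v (half_pos hε)] with v' hv'
  simp only [dagSub]
  refine Filter.limsup_le_of_le (by isBoundedDefault) ?_
  rw [eventually_dag_iff (p := fun x t u => dq f x t u ≤ (c : EReal))]
  refine ⟨R, δ, hδ, ε/2, half_pos hε, fun x t u hx ht1 ht2 hu => (H x t u hx ht1 ht2 ?_).le⟩
  have h2 := mem_ball.1 hv'
  calc dist u v ≤ dist u v' + dist v' v := dist_triangle _ _ _
  _ < ε/2 + ε/2 := add_lt_add hu h2
  _ = ε := add_halves ε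

lemma lsc_upSub {n : ℕ} (f : En n → EReal) : LowerSemicontinuous (upSub f) := by
  intro v y hy
  simp only [upSub, lt_iSup_iff] at hy
  obtain ⟨ε, hε, hyL⟩ := hy
  filter_upwards [Metric.ball_mem_nhds v (half_pos hε)] with v' hv'
  have hsub : closedBall v' (ε/2) ⊆ closedBall v ε := by
    apply closedBall_subset_closedBall'
    have := mem_ball.1 hv'
    linarith
  have hmono :
      Filter.limsup (fun q : En n × ℝ => ⨅ w ∈ closedBall v ε, dq f q.1 q.2 w)
        (atInfty n ×ˢ 𝓝[>] (0:ℝ)) ≤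
      Filter.limsup (fun q : En n × ℝ => ⨅ w ∈ closedBall v' (ε/2), dq f q.1 q.2 w)
        (atInfty n ×ˢ 𝓝[>] (0:ℝ)) :=
    Filter.limsup_le_limsup (Eventually.of_forall fun q => iInf_le_iInf_of_subset hsub)
  refine lt_of_lt_of_le (lt_of_lt_of_le hyL hmono) ?_
  exact le_iSup₂ (f := fun (ε : ℝ) (_ : 0 < ε) =>
    Filter.limsup (fun q : En n × ℝ => ⨅ w ∈ closedBall v' ε, dq f q.1 q.2 w)
      (atInfty n ×ˢ 𝓝[>] (0:ℝ))) (ε/2) (half_pos hε)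

lemma dagSub_le_upSub {n : ℕ} (f : En n → EReal)
    (hreal : ∃ R₁ : ℝ, ∀ x : En n, R₁ ≤ ‖x‖ → ∃ r : ℝ, f x = (r : EReal))
    {v : En n} (hv : dagSub f v < ⊤) : dagSub f v ≤ upSub f v := by
  obtain ⟨cg, hcg⟩ := exists_real_gt _ hv
  refine le_of_forall_coe_gt fun ch hch => ?_
  refine le_coe_of_forall_add fun η hη => ?_
  set lam := min (1/2 : ℝ) (η / (|cg - ch| + 1)) with hlamdef
  have hl0 : 0 < lam := lt_min (by norm_num) (by positivity)
  have hl1 : lam < 1 := lt_of_le_of_lt (min_le_left _ _) (by norm_num)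
  have hcore := core f hreal hcg hch hl0 hl1
  rw [show lam • v + (1 - lam) • v = v by module] at hcore
  refine le_trans hcore ?_
  rw [EReal.coe_le_coe_iff]
  have hD : (0:ℝ) ≤ |cg - ch| := abs_nonneg _
  have hl2 : lam ≤ η / (|cg - ch| + 1) := min_le_right _ _
  have h5 : lam * |cg - ch| ≤ η / (|cg - ch| + 1) * |cg - ch| :=
    mul_le_mul_of_nonneg_right hl2 hD
  have h6 : η / (|cg - ch| + 1) * |cg - ch| ≤ η := by
    rw [div_mul_eq_mul_div, div_le_iff₀ (by positivity)]
    nlinarith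
  have h7 : cg - ch ≤ |cg - ch| := le_abs_self _
  nlinarith [mul_le_mul_of_nonneg_left h7 hl0.le]

lemma dag_lt_top_of_interior {n : ℕ} (f : En n → EReal)
    (hreal : ∃ R₁ : ℝ, ∀ x : En n, R₁ ≤ ‖x‖ → ∃ r : ℝ, f x = (r : EReal))
    {v₀ : En n} (hv₀ : dagSub f v₀ < ⊤) {v : En n} {ρ : ℝ} (hρ : 0 < ρ)
    (hball : ∀ w : En n, dist w v < ρ → upSub f w < ⊤) : dagSub f v < ⊤ := by
  obtain ⟨cg, hcg⟩ := exists_real_gt _ hv₀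
  set D := ‖v - v₀‖ with hDdef
  have hD0 : 0 ≤ D := norm_nonneg _
  set lam := min (1/2 : ℝ) (ρ / (4 * (D + 1))) with hlamdef
  have hl0 : 0 < lam := lt_min (by norm_num) (by positivity)
  have hl1 : lam < 1 := lt_of_le_of_lt (min_le_left _ _) (by norm_num)
  have h1l : (0:ℝ) < 1 - lam := by linarith
  set vh := (1 - lam)⁻¹ • (v - lam • v₀) with hvhdef
  have hcomb : lam • v₀ + (1 - lam) • vh = v := by
    rw [hvhdef]
    match_scalars <;> field_simp <;> ring
  have hvhd : dist vh v < ρ := by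
    rw [dist_eq_norm]
    have hrel : vh - v = (lam * (1 - lam)⁻¹) • (v - v₀) := by
      rw [hvhdef]
      match_scalars <;> field_simp <;> ring
    rw [hrel, norm_smul, Real.norm_of_nonneg (by positivity), ← hDdef]
    have h2 : (1 - lam)⁻¹ ≤ 2 := by
      have h3 : (1/2 : ℝ) ≤ 1 - lam := by
        have := min_le_left (1/2 : ℝ) (ρ / (4 * (D + 1)))
        simp only [← hlamdef] at this
        linarith
      calc (1 - lam)⁻¹ ≤ ((1:ℝ)/2)⁻¹ := inv_anti₀ (by norm_num) h3
      _ = 2 := by norm_num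
    have h3 : lam ≤ ρ / (4 * (D + 1)) := min_le_right _ _
    have h4 : ρ / (4 * (D + 1)) * (4 * (D + 1)) = ρ := div_mul_cancel₀ _ (by positivity)
    nlinarith [mul_nonneg hl0.le hD0, mul_pos hl0 h1l]
  obtain ⟨ch, hch⟩ := exists_real_gt _ (hball vh hvhd)
  have hcore := core f hreal hcg hch hl0 hl1
  rw [hcomb] at hcore
  exact lt_of_le_of_lt hcore (EReal.coe_lt_top _)


/-- Proposition 4.12: if `D^†_f(∞) ≠ ∅` then `D^†_f(∞) = int D^↑_f(∞)`, and `f^↑(∞; ·)`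
is continuous on `D^†_f(∞)` where it agrees with `f^†(∞; ·)`. -/
theorem stmt12 (n : ℕ) (f : En n → EReal) (hlsc : LowerSemicontinuous f)
    (hunb : ¬ IsBounded {x : En n | f x < ⊤})
    (hne : {v : En n | dagSub f v < ⊤}.Nonempty) :
    {v : En n | dagSub f v < ⊤} = interior {v : En n | upSub f v < ⊤} ∧
    ∀ v : En n, dagSub f v < ⊤ →
      ContinuousAt (upSub f) v ∧ upSub f v = dagSub f v := by
  obtain ⟨v₀, hv₀⟩ := hne
  have hreal := freal f hv₀
  have hEq : ∀ v : En n, dagSub f v < ⊤ → upSub f v = dagSub f v := fun v hv =>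
    le_antisymm (upSub_le_dagSub f v) (dagSub_le_upSub f hreal hv)
  have hOpen : ∀ v : En n, dagSub f v < ⊤ → ∀ᶠ v' in 𝓝 v, dagSub f v' < ⊤ := by
    intro v hv
    obtain ⟨c, hc⟩ := exists_real_gt _ hv
    exact (dagSub_le_of_lt f hc).mono fun v' h => lt_of_le_of_lt h (EReal.coe_lt_top c)
  constructor
  · apply Subset.antisymm
    · intro v hv
      rw [mem_interior_iff_mem_nhds]
      have h2 : ∀ᶠ v' in 𝓝 v, upSub f v' < ⊤ :=
        (hOpen v hv).mono fun v' h => lt_of_le_of_lt (upSub_le_dagSub f v') h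
      exact h2
    · intro v hv
      rw [mem_interior_iff_mem_nhds, Metric.mem_nhds_iff] at hv
      obtain ⟨ρ, hρ, hball⟩ := hv
      exact dag_lt_top_of_interior f hreal hv₀ hρ fun w hw => hball (mem_ball.2 hw)
  · intro v hv
    refine ⟨?_, hEq v hv⟩
    rw [ContinuousAt, tendsto_order]
    constructor
    · intro a ha
      exact lsc_upSub f v a ha
    · intro b hb
      rw [hEq v hv] at hb
      obtain ⟨c, hc1, hc2⟩ := EReal.exists_between_coe_real hb
      exact (dagSub_le_of_lt f hc1).mono fun v' h =>
        lt_of_le_of_lt (le_trans (upSub_le_dagSub f v') h) hc2
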